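/- arXiv:2312.17023 — 4 statements merged into one kernel-verified Lean document; each statement's English description precedes it below -/
import Mathlib

section
/- (The lift is the Sierpiński cone.) Let A and C be dcpos, let c₀ : C, and let c₁ : A → C be Scott-continuous with c₀ ≤ c₁ a for all a : A. Then there exists a unique Scott-continuous map h : WithBot A → C with h ⊥ = c₀ and h ↑a = c₁ a for all a : A. -/
/-!
A nonempty directed set `S ⊆ WithBot A` is either `{⊥}` or contains some `↑a`. In the latter case
`S` and its part `↑(↑⁻¹' S)` coming from `A` are mutually cofinal, hence have the same upper
bounds, so the sup of `S` is the image of the sup of the directed set `↑⁻¹' S`. Continuity of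
`WithBot.recBotCoe c₀ c₁` thus reduces to that of `c₁`, the extra value `c₀` being dominated by
every `c₁ a`.
-/

/-- A partial order is a dcpo when every nonempty directed subset has a least upper bound. -/
def IsDcpo (α : Type*) [PartialOrder α] : Prop :=
  ∀ S : Set α, S.Nonempty → DirectedOn (· ≤ ·) S → ∃ x, IsLUB S x

/-- A map between partial orders is Scott-continuous when it is monotone and sends the least
upper bound of any nonempty directed subset to the least upper bound of its image. -/
def ScottCont {α β : Type*} [PartialOrder α] [PartialOrder β] (f : α → β) : Prop :=
  Monotone f ∧ ∀ S : Set α, S.Nonempty → DirectedOn (· ≤ ·) S →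
    ∀ x, IsLUB S x → IsLUB (f '' S) (f x)

theorem isLUB_iff_of_isCofinalFor {α : Type*} [Preorder α] {s t : Set α} {a : α} (hts : t ⊆ s)
    (hst : IsCofinalFor s t) : IsLUB s a ↔ IsLUB t a :=
  isLUB_congr <| (upperBounds_mono_set hts).antisymm (upperBounds_mono_of_isCofinalFor hst)

namespace WithBot

variable {A C : Type*}

theorem isCofinalFor_image_coe_preimage [Preorder A] {S : Set (WithBot A)} {a : A}
    (ha : (a : WithBot A) ∈ S) : IsCofinalFor S ((↑) '' ((↑) ⁻¹' S : Set A)) := by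
  intro s hs
  cases s with
  | bot => exact ⟨a, ⟨a, ha, rfl⟩, bot_le⟩
  | coe b => exact ⟨b, ⟨b, hs, rfl⟩, le_rfl⟩

theorem directedOn_preimage_coe [Preorder A] {S : Set (WithBot A)}
    (hS : DirectedOn (· ≤ ·) S) : DirectedOn (· ≤ ·) ((↑) ⁻¹' S : Set A) := by
  intro a ha b hb
  obtain ⟨z, hz, haz, hbz⟩ := hS _ ha _ hb
  obtain ⟨c, rfl, hac⟩ := coe_le_iff.mp haz
  exact ⟨c, hz, hac, coe_le_coe.mp hbz⟩

theorem monotone_recBotCoe [Preorder A] [Preorder C] {c₀ : C} {c₁ : A → C} (hc₁ : Monotone c₁)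
    (hle : ∀ a, c₀ ≤ c₁ a) : Monotone (WithBot.recBotCoe c₀ c₁ : WithBot A → C) := by
  intro x y hxy
  cases x with
  | bot =>
    cases y with
    | bot => exact le_rfl
    | coe b => exact hle b
  | coe a =>
    obtain ⟨b, rfl, hab⟩ := coe_le_iff.mp hxy
    exact hc₁ hab

theorem scottCont_recBotCoe [PartialOrder A] [PartialOrder C] {c₀ : C} {c₁ : A → C}
    (hc₁ : ScottCont c₁) (hle : ∀ a, c₀ ≤ c₁ a) :
    ScottCont (WithBot.recBotCoe c₀ c₁ : WithBot A → C) := by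
  set h : WithBot A → C := WithBot.recBotCoe c₀ c₁
  have hmono : Monotone h := monotone_recBotCoe hc₁.1 hle
  refine ⟨hmono, fun S hSne hSdir x hx => ?_⟩
  by_cases hcoe : ∃ a : A, (a : WithBot A) ∈ S
  · obtain ⟨a, ha⟩ := hcoe
    set T : Set A := (↑) ⁻¹' S
    have hcof : IsCofinalFor S ((↑) '' T) := isCofinalFor_image_coe_preimage ha
    obtain ⟨b, rfl, -⟩ := coe_le_iff.mp (hx.1 ha)
    have hT : IsLUB T b :=
      .of_image coe_le_coe ((isLUB_iff_of_isCofinalFor (Set.image_preimage_subset _ S) hcof).mp hx)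
    have himage : h '' ((↑) '' T) = c₁ '' T := Set.image_image h _ T
    rw [isLUB_iff_of_isCofinalFor (Set.image_mono (Set.image_preimage_subset _ S))
      (hcof.image_of_monotone hmono), himage]
    exact hc₁.2 T ⟨a, ha⟩ (directedOn_preimage_coe hSdir) b hT
  · have hS : S = {⊥} := hSne.subset_singleton_iff.mp fun s hs => by
      cases s with
      | bot => rfl
      | coe a => exact absurd ⟨a, hs⟩ hcoe
    subst hS
    rw [isLUB_singleton.unique hx, Set.image_singleton]
    exact isLUB_singleton

end WithBot

theorem lift_is_sierpinski_cone_general {A C : Type*} [PartialOrder A] [PartialOrder C]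
    (c₀ : C) (c₁ : A → C) (hc₁ : ScottCont c₁)
    (hle : ∀ a : A, c₀ ≤ c₁ a) :
    ∃! h : WithBot A → C, ScottCont h ∧ h ⊥ = c₀ ∧ ∀ a : A, h (a : WithBot A) = c₁ a := by
  refine ⟨WithBot.recBotCoe c₀ c₁, ⟨WithBot.scottCont_recBotCoe hc₁ hle, rfl, fun _ => rfl⟩, ?_⟩
  rintro g ⟨-, hg₀, hg₁⟩
  funext x
  cases x with
  | bot => exact hg₀
  | coe a => exact hg₁ a

/-- the lift is the Sierpiński cone: given dcpos `A`, `C`, a point `c₀ : C`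
and a Scott-continuous `c₁ : A → C` with `c₀ ≤ c₁ a` for all `a`, there is a unique
Scott-continuous map `h : WithBot A → C` with `h ⊥ = c₀` and `h ↑a = c₁ a`. -/
theorem lift_is_sierpinski_cone {A C : Type*} [PartialOrder A] [PartialOrder C]
    (hA : IsDcpo A) (hC : IsDcpo C) (c₀ : C) (c₁ : A → C) (hc₁ : ScottCont c₁)
    (hle : ∀ a : A, c₀ ≤ c₁ a) :
    ∃! h : WithBot A → C, ScottCont h ∧ h ⊥ = c₀ ∧ ∀ a : A, h (a : WithBot A) = c₁ a :=
  lift_is_sierpinski_cone_general c₀ c₁ hc₁ hle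
end

section
/- (The lift classifies partial maps.) Let A and B be dcpos. The assignment sending a Scott-continuous map f : A → WithBot B to the pair (U_f, e_f), where U_f = {x : A | f x ≠ ⊥} and e_f : U_f → B is the corestriction of f (with U_f carrying the order induced from A), is a bijection from the set of Scott-continuous maps A → WithBot B onto the set of pairs (U, e) in which U ⊆ A is Scott-open and e : U → B is Scott-continuous. -/
/-- A subset of a dcpo is Scott-open when it is an upper set that is inaccessible by
directed suprema. -/
def ScottOpen {α : Type*} [PartialOrder α] (U : Set α) : Prop :=
  IsUpperSet U ∧ ∀ S : Set α, S.Nonempty → DirectedOn (· ≤ ·) S →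
    ∀ x, IsLUB S x → x ∈ U → ∃ s ∈ S, s ∈ U

/-- The assignment sending `f : A → WithBot B` to the partial map it represents: the
domain of definition `U_f = {x | f x ≠ ⊥}` together with the corestriction `e_f : U_f → B`. -/
noncomputable def toPartialMap {A B : Type*} (f : A → WithBot B) :
    Σ U : Set A, (U → B) :=
  ⟨{x : A | f x ≠ ⊥}, fun x => (f x.1).unbot x.2⟩

section Order

variable {α β : Type*} [Preorder α] [Preorder β]

theorem IsUpperSet.isLUB_image_iff {f : α → β} (hrange : IsUpperSet (Set.range f))
    (hf : ∀ {x y}, f x ≤ f y ↔ x ≤ y) {S : Set α} (hS : S.Nonempty) {x : α} :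
    IsLUB (f '' S) (f x) ↔ IsLUB S x := by
  refine ⟨IsLUB.of_image hf, fun hx => ⟨fun _ ⟨s, hs, h⟩ => h ▸ hf.2 (hx.1 hs), ?_⟩⟩
  intro z hz
  obtain ⟨s, hs⟩ := hS
  obtain ⟨y, rfl⟩ : z ∈ Set.range f := hrange (hz (Set.mem_image_of_mem f hs)) ⟨s, rfl⟩
  exact hf.2 (hx.2 fun t ht => hf.1 (hz (Set.mem_image_of_mem f ht)))

theorem DirectedOn.isLUB_image_inter_iff {f : α → β} (hf : Monotone f) {S U : Set α}
    (hS : DirectedOn (· ≤ ·) S) (hU : IsUpperSet U) (hUS : (U ∩ S).Nonempty) {b : β} :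
    IsLUB (f '' (U ∩ S)) b ↔ IsLUB (f '' S) b := by
  refine isLUB_congr (subset_antisymm ?_ (upperBounds_mono_set (Set.image_mono
    Set.inter_subset_right)))
  rintro z hz _ ⟨s, hs, rfl⟩
  obtain ⟨s₀, hs₀U, hs₀S⟩ := hUS
  obtain ⟨c, hcS, hsc, hs₀c⟩ := hS s hs s₀ hs₀S
  exact (hf hsc).trans (hz (Set.mem_image_of_mem f ⟨hU hs₀c hs₀U, hcS⟩))

theorem DirectedOn.preimage_val_of_isUpperSet {S U : Set α} (hS : DirectedOn (· ≤ ·) S)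
    (hU : IsUpperSet U) : DirectedOn (· ≤ ·) (Subtype.val ⁻¹' S : Set U) := by
  intro a ha b hb
  obtain ⟨c, hcS, hac, hbc⟩ := hS a ha b hb
  exact ⟨⟨c, hU hac a.2⟩, hcS, hac, hbc⟩

theorem IsLUB.preimage_val_of_isUpperSet {S U : Set α} {x : α} (hx : IsLUB S x)
    (hS : DirectedOn (· ≤ ·) S) (hU : IsUpperSet U) (hUS : (U ∩ S).Nonempty) (hxU : x ∈ U) :
    IsLUB (Subtype.val ⁻¹' S : Set U) ⟨x, hxU⟩ := by
  have hrange : IsUpperSet (Set.range (Subtype.val : U → α)) := by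
    rwa [Subtype.range_coe]
  obtain ⟨s₀, hs₀U, hs₀S⟩ := hUS
  rw [← hrange.isLUB_image_iff Subtype.coe_le_coe ⟨⟨s₀, hs₀U⟩, hs₀S⟩,
    Subtype.image_preimage_coe, ← Set.image_id (U ∩ S),
    hS.isLUB_image_inter_iff monotone_id hU ⟨s₀, hs₀U, hs₀S⟩, Set.image_id]
  exact hx

theorem WithBot.isUpperSet_range_coe : IsUpperSet (Set.range (WithBot.some : α → WithBot α)) := by
  rw [WithBot.range_coe]
  exact isUpperSet_Ioi (a := (⊥ : WithBot α))

end Order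

abbrev PartialMap (A B : Type*) := Σ U : Set A, (U → B)

section PartialMap

variable {A B : Type*}

theorem PartialMap.mk_eq_mk {U V : Set A} {e : U → B} {e' : V → B} (h : U = V)
    (he : ∀ x (hU : x ∈ U) (hV : x ∈ V), e ⟨x, hU⟩ = e' ⟨x, hV⟩) :
    (⟨U, e⟩ : PartialMap A B) = ⟨V, e'⟩ := by
  subst h
  exact congrArg _ (funext fun x => he x x.2 x.2)

open Classical in
noncomputable def ofPartialMap (p : PartialMap A B) : A → WithBot B :=
  fun x => if h : x ∈ p.1 then (p.2 ⟨x, h⟩ : WithBot B) else ⊥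

theorem ofPartialMap_val (p : PartialMap A B) (x : p.1) : ofPartialMap p x = p.2 x :=
  dif_pos x.2

theorem ofPartialMap_of_notMem (p : PartialMap A B) {x : A} (h : x ∉ p.1) :
    ofPartialMap p x = ⊥ :=
  dif_neg h

theorem ofPartialMap_ne_bot_iff (p : PartialMap A B) {x : A} :
    ofPartialMap p x ≠ ⊥ ↔ x ∈ p.1 := by
  refine ⟨fun h => by_contra fun hx => h (ofPartialMap_of_notMem p hx), fun hx => ?_⟩
  rw [ofPartialMap_val p ⟨x, hx⟩]
  exact WithBot.coe_ne_bot

theorem coe_toPartialMap_snd (f : A → WithBot B) (x : (toPartialMap f).1) :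
    ((toPartialMap f).2 x : WithBot B) = f x :=
  WithBot.coe_unbot _ x.2

theorem ofPartialMap_toPartialMap (f : A → WithBot B) : ofPartialMap (toPartialMap f) = f := by
  funext x
  by_cases hx : f x = ⊥
  · rw [ofPartialMap_of_notMem _ (not_not_intro hx), hx]
  · rw [ofPartialMap_val (toPartialMap f) ⟨x, hx⟩, coe_toPartialMap_snd]

theorem toPartialMap_ofPartialMap (p : PartialMap A B) : toPartialMap (ofPartialMap p) = p :=
  PartialMap.mk_eq_mk (Set.ext fun _ => ofPartialMap_ne_bot_iff p) fun x _ hx =>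
    WithBot.coe_injective ((coe_toPartialMap_snd _ _).trans (ofPartialMap_val p ⟨x, hx⟩))

variable [PartialOrder A] [PartialOrder B]

theorem ScottCont.scottOpen_toPartialMap_fst {f : A → WithBot B} (hf : ScottCont f) :
    ScottOpen (toPartialMap f).1 := by
  refine ⟨fun x y hxy hx hy => hx (le_bot_iff.1 (hy ▸ hf.1 hxy)), ?_⟩
  intro S hS hdir x hx hxU
  by_contra! hS_bot
  refine hxU (le_bot_iff.1 ((hf.2 S hS hdir x hx).2 ?_))
  rintro _ ⟨s, hs, rfl⟩
  exact (not_not.1 (hS_bot s hs)).le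

theorem ScottCont.scottCont_toPartialMap_snd {f : A → WithBot B} (hf : ScottCont f) :
    ScottCont (toPartialMap f).2 := by
  have hU : IsUpperSet (Set.range (Subtype.val : (toPartialMap f).1 → A)) := by
    simpa only [Subtype.range_coe] using hf.scottOpen_toPartialMap_fst.1
  have hcomp : ((↑) : B → WithBot B) ∘ (toPartialMap f).2 = f ∘ Subtype.val :=
    funext (coe_toPartialMap_snd f)
  refine ⟨fun u v huv => WithBot.coe_le_coe.1 ?_, fun S hS hdir x hx => ?_⟩
  · rw [coe_toPartialMap_snd, coe_toPartialMap_snd]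
    exact hf.1 huv
  have hfS := hf.2 _ (hS.image _) (hdir.mono_comp fun _ _ h => h) _
    ((hU.isLUB_image_iff Subtype.coe_le_coe hS).2 hx)
  rw [← Set.image_comp, ← hcomp, Set.image_comp, ← coe_toPartialMap_snd f x] at hfS
  exact (WithBot.isUpperSet_range_coe.isLUB_image_iff WithBot.coe_le_coe (hS.image _)).1 hfS

theorem ofPartialMap_monotone {p : PartialMap A B} (hU : IsUpperSet p.1) (he : Monotone p.2) :
    Monotone (ofPartialMap p) := by
  intro x y hxy
  by_cases hx : x ∈ p.1
  · rw [ofPartialMap_val p ⟨x, hx⟩, ofPartialMap_val p ⟨y, hU hxy hx⟩]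
    exact WithBot.coe_le_coe.2 (he hxy)
  · rw [ofPartialMap_of_notMem p hx]
    exact bot_le

theorem ScottOpen.scottCont_ofPartialMap {p : PartialMap A B} (hU : ScottOpen p.1)
    (he : ScottCont p.2) : ScottCont (ofPartialMap p) := by
  have hmono := ofPartialMap_monotone hU.1 he.1
  refine ⟨hmono, fun S hS hdir x hx => ?_⟩
  by_cases hxU : x ∈ p.1
  swap
  · rw [ofPartialMap_of_notMem p hxU]
    refine ⟨?_, fun _ _ => bot_le⟩
    rintro _ ⟨s, hs, rfl⟩
    rw [ofPartialMap_of_notMem p fun hsU => hxU (hU.1 (hx.1 hs) hsU)]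
  obtain ⟨s₀, hs₀S, hs₀U⟩ := hU.2 S hS hdir x hx hxU
  have hUS : (p.1 ∩ S).Nonempty := ⟨s₀, hs₀U, hs₀S⟩
  set T : Set p.1 := Subtype.val ⁻¹' S
  have hT : T.Nonempty := ⟨⟨s₀, hs₀U⟩, hs₀S⟩
  have hTlub : IsLUB T ⟨x, hxU⟩ := hx.preimage_val_of_isUpperSet hdir hU.1 hUS hxU
  have heT := he.2 T hT (hdir.preimage_val_of_isUpperSet hU.1) _ hTlub
  rw [← WithBot.isUpperSet_range_coe.isLUB_image_iff WithBot.coe_le_coe (hT.image _),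
    Set.image_image] at heT
  rw [← hdir.isLUB_image_inter_iff hmono hU.1 hUS, ← Subtype.image_preimage_coe, Set.image_image,
    ofPartialMap_val p ⟨x, hxU⟩]
  simpa only [ofPartialMap_val] using heT

end PartialMap

theorem lift_classifies_partial_maps_general {A B : Type*} [PartialOrder A] [PartialOrder B] :
    Set.BijOn (toPartialMap (A := A) (B := B))
      {f : A → WithBot B | ScottCont f}
      {p : Σ U : Set A, (U → B) | ScottOpen p.1 ∧ ScottCont p.2} :=
  Set.InvOn.bijOn
    ⟨fun f _ => ofPartialMap_toPartialMap f, fun p _ => toPartialMap_ofPartialMap p⟩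
    (fun _ hf => ⟨hf.scottOpen_toPartialMap_fst, hf.scottCont_toPartialMap_snd⟩)
    (fun _ hp => hp.1.scottCont_ofPartialMap hp.2)

/-- the lift classifies partial maps: the assignment `f ↦ (U_f, e_f)` is a
bijection from Scott-continuous maps `A → WithBot B` onto pairs `(U, e)` with `U ⊆ A`
Scott-open and `e : U → B` Scott-continuous (where `U` carries the induced order). -/
theorem lift_classifies_partial_maps {A B : Type*} [PartialOrder A] [PartialOrder B]
    (hA : IsDcpo A) (hB : IsDcpo B) :
    Set.BijOn (toPartialMap (A := A) (B := B))
      {f : A → WithBot B | ScottCont f}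
      {p : Σ U : Set A, (U → B) | ScottOpen p.1 ∧ ScottCont p.2} :=
  lift_classifies_partial_maps_general
end

section
/- (The lifting functor is conservative.) Let A and B be dcpos and f : A → B a Scott-continuous map. If the lifted map WithBot.map f : WithBot A → WithBot B (sending ⊥ to ⊥ and ↑a to ↑(f a)) is the underlying map of an order isomorphism WithBot A ≃o WithBot B, then f itself is an order isomorphism A ≃o B. -/
namespace WithBot

variable {α β : Type*} {f : α → β}

theorem injective_of_injective_map (hf : Function.Injective (WithBot.map f)) :
    Function.Injective f :=
  fun _ _ hab => coe_injective (hf (congrArg some hab))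

theorem surjective_of_surjective_map (hf : Function.Surjective (WithBot.map f)) :
    Function.Surjective f := by
  intro b
  obtain ⟨_ | a, ha⟩ := hf b
  · exact absurd ha bot_ne_coe
  · exact ⟨a, coe_injective ha⟩

theorem le_iff_le_of_map_le_map_iff [LE α] [LE β]
    (hf : ∀ {x y : WithBot α}, WithBot.map f x ≤ WithBot.map f y ↔ x ≤ y) {a b : α} :
    f a ≤ f b ↔ a ≤ b := by
  simpa only [map_coe, coe_le_coe] using @hf a b

end WithBot

noncomputable def OrderIso.ofWithBotMap {α β : Type*} [LE α] [LE β] (f : α → β)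
    (e : WithBot α ≃o WithBot β) (he : ⇑e = WithBot.map f) : α ≃o β where
  toEquiv := Equiv.ofBijective f
    ⟨WithBot.injective_of_injective_map (he ▸ e.injective),
      WithBot.surjective_of_surjective_map (he ▸ e.surjective)⟩
  map_rel_iff' := WithBot.le_iff_le_of_map_le_map_iff (he ▸ e.le_iff_le)

theorem lifting_conservative_general {A B : Type*} [PartialOrder A] [PartialOrder B]
    (f : A → B) (e : WithBot A ≃o WithBot B) (he : ⇑e = WithBot.map f) :
    ∃ e' : A ≃o B, ⇑e' = f :=
  ⟨OrderIso.ofWithBotMap f e he, rfl⟩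

/-- the lifting functor is conservative: if the lifted map
`WithBot.map f : WithBot A → WithBot B` of a Scott-continuous map `f : A → B` of dcpos
underlies an order isomorphism, then `f` underlies an order isomorphism `A ≃o B`. -/
theorem lifting_conservative {A B : Type*} [PartialOrder A] [PartialOrder B]
    (hA : IsDcpo A) (hB : IsDcpo B) (f : A → B) (hf : ScottCont f)
    (e : WithBot A ≃o WithBot B) (he : ⇑e = WithBot.map f) :
    ∃ e' : A ≃o B, ⇑e' = f :=
  lifting_conservative_general f e he
end

section
/- (The commutator is the universal bistrict map: L A ⊗ L B ≅ L(A × B).) Let A and B be dcpos and C a pointed dcpo. For every Scott-continuous map f : WithBot A × WithBot B → C (product order) that is bistrict, i.e. f(⊥, v) = ⊥ and f(u, ⊥) = ⊥ for all u : WithBot A, v : WithBot B, there exists a unique strict Scott-continuous map g : WithBot (A × B) → C with f(u, v) = g(κ(u, v)) for all u, v. -/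
/-- The commutator `κ : WithBot A × WithBot B → WithBot (A × B)`: it sends `(↑a, ↑b)` to
`↑(a, b)` and any pair with a `⊥` component to `⊥`. -/
def kappa {A B : Type*} (p : WithBot A × WithBot B) : WithBot (A × B) :=
  WithBot.recBotCoe ⊥ (fun a => WithBot.map (fun b => (a, b)) p.2) p.1


/-!
`κ` has a left adjoint `unzip w = (w.map fst, w.map snd)` with `κ ∘ unzip = id`, so `unzip` preserves
all least upper bounds and is in particular Scott-continuous. For bistrict `f` we have
`f ∘ unzip ∘ κ = f`, because `unzip (κ (u, v))` differs from `(u, v)` only when `u` or `v` is `⊥`.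
Hence `f ∘ unzip` is a factorization, and any factorization `g` equals `g ∘ κ ∘ unzip = f ∘ unzip`.
-/

lemma ScottCont.comp {α β γ : Type*} [PartialOrder α] [PartialOrder β] [PartialOrder γ]
    {g : β → γ} {f : α → β} (hg : ScottCont g) (hf : ScottCont f) : ScottCont (g ∘ f) := by
  refine ⟨hg.1.comp hf.1, fun S hne hdir x hx => ?_⟩
  rw [Set.image_comp]
  exact hg.2 _ (hne.image f) (hdir.mono_comp hf.1) _ (hf.2 S hne hdir x hx)

lemma GaloisConnection.scottCont {α β : Type*} [PartialOrder α] [PartialOrder β]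
    {l : α → β} {u : β → α} (gc : GaloisConnection l u) : ScottCont l :=
  ⟨gc.monotone_l, fun _ _ _ _ hx => gc.isLUB_l_image hx⟩

section Commutator

variable {A B : Type*}

def unzip (w : WithBot (A × B)) : WithBot A × WithBot B :=
  (w.map Prod.fst, w.map Prod.snd)

@[simp] lemma unzip_bot : unzip (⊥ : WithBot (A × B)) = (⊥, ⊥) := rfl

@[simp] lemma unzip_coe (p : A × B) : unzip (p : WithBot (A × B)) = (↑p.1, ↑p.2) := rfl

@[simp] lemma kappa_bot_left (v : WithBot B) : kappa ((⊥ : WithBot A), v) = ⊥ := rfl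

@[simp] lemma kappa_coe_bot (a : A) : kappa ((a : WithBot A), (⊥ : WithBot B)) = ⊥ := rfl

@[simp] lemma kappa_coe_coe (a : A) (b : B) :
    kappa ((a : WithBot A), (b : WithBot B)) = ↑(a, b) := rfl

@[simp] lemma kappa_unzip (w : WithBot (A × B)) : kappa (unzip w) = w := by
  cases w <;> rfl

lemma gc_unzip_kappa [PartialOrder A] [PartialOrder B] :
    GaloisConnection (unzip : WithBot (A × B) → _) kappa := by
  intro w p
  obtain ⟨u, v⟩ := p
  induction w using WithBot.recBotCoe <;> induction u using WithBot.recBotCoe <;>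
    induction v using WithBot.recBotCoe <;> simp [Prod.le_def]

lemma apply_unzip_kappa {C : Type*} [Bot C] {f : WithBot A × WithBot B → C}
    (hbot₁ : ∀ v, f (⊥, v) = ⊥) (hbot₂ : ∀ u, f (u, ⊥) = ⊥) (p : WithBot A × WithBot B) :
    f (unzip (kappa p)) = f p := by
  obtain ⟨u, v⟩ := p
  induction u using WithBot.recBotCoe <;> induction v using WithBot.recBotCoe <;>
    simp [hbot₁, hbot₂]

end Commutator

theorem commutator_universal_bistrict_general {A B C : Type*} [PartialOrder A] [PartialOrder B]
    [PartialOrder C] [OrderBot C]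
    (f : WithBot A × WithBot B → C) (hf : ScottCont f)
    (hbot₁ : ∀ v : WithBot B, f (⊥, v) = ⊥) (hbot₂ : ∀ u : WithBot A, f (u, ⊥) = ⊥) :
    ∃! g : WithBot (A × B) → C, ScottCont g ∧ g ⊥ = ⊥ ∧
      ∀ (u : WithBot A) (v : WithBot B), f (u, v) = g (kappa (u, v)) := by
  refine ⟨f ∘ unzip, ⟨hf.comp gc_unzip_kappa.scottCont, hbot₁ ⊥,
    fun u v => (apply_unzip_kappa hbot₁ hbot₂ (u, v)).symm⟩, ?_⟩
  rintro g ⟨-, -, hfac⟩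
  funext w
  rw [Function.comp_apply, hfac, kappa_unzip]

/-- the commutator is the universal bistrict map, `L A ⊗ L B ≅ L (A × B)`:
for dcpos `A`, `B` and a pointed dcpo `C`, every bistrict Scott-continuous map
`f : WithBot A × WithBot B → C` factors through `κ` by a unique strict Scott-continuous
map `g : WithBot (A × B) → C`. -/
theorem commutator_universal_bistrict {A B C : Type*} [PartialOrder A] [PartialOrder B]
    [PartialOrder C] [OrderBot C] (hA : IsDcpo A) (hB : IsDcpo B) (hC : IsDcpo C)
    (f : WithBot A × WithBot B → C) (hf : ScottCont f)
    (hbot₁ : ∀ v : WithBot B, f (⊥, v) = ⊥) (hbot₂ : ∀ u : WithBot A, f (u, ⊥) = ⊥) :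
    ∃! g : WithBot (A × B) → C, ScottCont g ∧ g ⊥ = ⊥ ∧
      ∀ (u : WithBot A) (v : WithBot B), f (u, v) = g (kappa (u, v)) :=
  commutator_universal_bistrict_general f hf hbot₁ hbot₂
end
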